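/- arXiv:2206.08133 — 3 statements merged into one kernel-verified Lean document; each statement's English description precedes it below -/
import Mathlib

section
/- Suppose the price functions are affine, P_j(d) = α_j − β_j d with β_j > 0, and Assumption A2 holds (each row of H ∈ {0,1}^{n×m} has exactly one nonzero entry). Then the function Φ(f, q) = w(f, q) − (1/2) Σ_{j=1}^m β_j (Hᵀ q²)_j, where q² denotes the coordinatewise square, satisfies ∂Φ/∂q_i = ∂u_i/∂q_i for every producer i, for all q ∈ ℝ₊^n and all f. -/
/-!
With affine prices and `H ∈ {0,1}`, the difference `Φ(f, q) − uᵢ(f, q)` does not depend on `qᵢ`: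
expanding both in `x = qᵢ`, the terms in `x` cancel except for `βⱼ x² (Hᵢⱼ² − Hᵢⱼ) / 2`, which
vanishes because `Hᵢⱼ² = Hᵢⱼ`. So `Φ` is an exact potential of the game, and the two partial
derivatives agree because the functions differ by a constant.
-/

open Finset intervalIntegral

theorem Finset.sum_apply_update {ι M : Type*} [Fintype ι] [DecidableEq ι] [AddCommMonoid M]
    {α : Type*} (g : ι → α → M) (q : ι → α) (i : ι) (x : α) :
    ∑ i', g i' (Function.update q i x i') = g i x + ∑ i' ∈ univ \ {i}, g i' (q i') := by
  simp_rw [Function.apply_update g]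
  exact sum_update_of_mem (mem_univ i) _ _

theorem integral_zero_of_affine {p : ℝ → ℝ} {a b : ℝ} (hp : ∀ d, p d = a - b * d) (t : ℝ) :
    ∫ s in (0 : ℝ)..t, p s = a * t - b * (t ^ 2 / 2) := by
  simp only [hp]
  rw [integral_sub intervalIntegrable_const (intervalIntegrable_id.const_mul b), integral_const,
    integral_const_mul, integral_id]
  simp [mul_comm]

section Cournot

variable {n m l : ℕ} (B : Fin m → Fin l → ℝ) (H : Fin n → Fin m → ℝ) (β : Fin m → ℝ)
  (C : Fin n → ℝ → ℝ) (P : Fin m → ℝ → ℝ) (f : Fin l → ℝ)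

/-- `(Bf + Hᵀq)ⱼ`, the total quantity on market `j`. -/
def marketQuantity (q : Fin n → ℝ) (j : Fin m) : ℝ :=
  (∑ k, B j k * f k) + ∑ i', H i' j * q i'

noncomputable def cournotPotential (q : Fin n → ℝ) : ℝ :=
  (∑ j, ∫ s in (0 : ℝ)..marketQuantity B H f q j, P j s)
    - ∑ i', C i' (q i')
    - (1 / 2) * ∑ j, β j * ∑ i', H i' j * q i' ^ 2

def cournotPayoff (q : Fin n → ℝ) (i : Fin n) : ℝ :=
  q i * (∑ j, H i j * P j (marketQuantity B H f q j)) - C i (q i)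

theorem cournotPotential_sub_cournotPayoff_update {α : Fin m → ℝ}
    (hH01 : ∀ i j, H i j = 0 ∨ H i j = 1) (hP : ∀ j d, P j d = α j - β j * d)
    (q : Fin n → ℝ) (i : Fin n) (x y : ℝ) :
    cournotPotential B H β C P f (Function.update q i x)
        - cournotPayoff B H C P f (Function.update q i x) i
      = cournotPotential B H β C P f (Function.update q i y)
        - cournotPayoff B H C P f (Function.update q i y) i := by
  set c : Fin m → ℝ := fun j => (∑ k, B j k * f k) + ∑ i' ∈ univ \ {i}, H i' j * q i'
  set e : Fin m → ℝ := fun j => ∑ i' ∈ univ \ {i}, H i' j * q i' ^ 2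
  suffices h : ∀ x, cournotPotential B H β C P f (Function.update q i x)
      - cournotPayoff B H C P f (Function.update q i x) i
        = (∑ j, (α j * c j - β j * (c j ^ 2 / 2) - (1 / 2) * (β j * e j)))
          - ∑ i' ∈ univ \ {i}, C i' (q i') by
    rw [h, h]
  intro x
  have hQ : ∀ j, marketQuantity B H f (Function.update q i x) j = c j + H i j * x := by
    intro j
    rw [marketQuantity, sum_apply_update (fun i' y => H i' j * y)]
    ring
  have hmarket : ∀ j, α j * (c j + H i j * x) - β j * ((c j + H i j * x) ^ 2 / 2)
        - (1 / 2) * (β j * (H i j * x ^ 2 + e j))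
        - x * (H i j * (α j - β j * (c j + H i j * x)))
      = α j * c j - β j * (c j ^ 2 / 2) - (1 / 2) * (β j * e j) := by
    intro j
    have hidem : H i j ^ 2 = H i j := by rcases hH01 i j with h | h <;> simp [h]
    linear_combination (β j * x ^ 2 / 2) * hidem
  simp only [cournotPotential, cournotPayoff, hQ, integral_zero_of_affine (hP _)]
  have hE : ∀ j, ∑ i', H i' j * Function.update q i x i' ^ 2 = H i j * x ^ 2 + e j := fun j =>
    sum_apply_update (fun i' y => H i' j * y ^ 2) q i x
  simp only [hP, hE, Function.update_self, sum_apply_update (fun i' y => C i' y)]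
  rw [← sum_congr rfl fun j _ => hmarket j]
  simp only [sum_sub_distrib, mul_sum]
  ring

theorem deriv_cournotPotential_update {α : Fin m → ℝ}
    (hH01 : ∀ i j, H i j = 0 ∨ H i j = 1) (hP : ∀ j d, P j d = α j - β j * d)
    (q : Fin n → ℝ) (i : Fin n) (a : ℝ) :
    deriv (fun x => cournotPotential B H β C P f (Function.update q i x)) a
      = deriv (fun x => cournotPayoff B H C P f (Function.update q i x) i) a := by
  have hconst : (fun x => cournotPotential B H β C P f (Function.update q i x))
      = fun x => cournotPayoff B H C P f (Function.update q i x) i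
          + (cournotPotential B H β C P f (Function.update q i 0)
            - cournotPayoff B H C P f (Function.update q i 0) i) := by
    funext x
    linarith [cournotPotential_sub_cournotPayoff_update B H β C P f hH01 hP q i x 0]
  rw [hconst, deriv_add_const]

end Cournot

theorem stmt4_general {n m l : ℕ}
    (B : Fin m → Fin l → ℝ) (H : Fin n → Fin m → ℝ)
    (α β : Fin m → ℝ)
    (C : Fin n → ℝ → ℝ)
    -- Assumption A2: each row of H has exactly one entry equal to 1, the rest 0
    (hH01 : ∀ i j, H i j = 0 ∨ H i j = 1)
    -- affine price functions
    (P : Fin m → ℝ → ℝ) (hP : ∀ j d, P j d = α j - β j * d)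
    (i : Fin n) (q : Fin n → ℝ) (f : Fin l → ℝ) :
    deriv (fun x : ℝ =>
        -- Φ(f, q) with q i replaced by x
        ((∑ j, ∫ s in (0 : ℝ)..((∑ k, B j k * f k) + ∑ i', H i' j * Function.update q i x i'),
            P j s)
          - ∑ i', C i' (Function.update q i x i')
          - (1 / 2) * ∑ j, β j * ∑ i', H i' j * (Function.update q i x i') ^ 2)) (q i)
    = deriv (fun x : ℝ =>
        -- uᵢ(f, q) with q i replaced by x
        (x * (∑ j, H i j *
              P j ((∑ k, B j k * f k) + ∑ i', H i' j * Function.update q i x i'))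
          - C i x)) (q i) := by
  have h := deriv_cournotPotential_update B H β C P f hH01 hP q i (q i)
  simp only [cournotPayoff, Function.update_self] at h
  exact h

/-- With affine prices `P j d = α j − β j * d` (`β j > 0`) and A2, the function
`Φ(f, q) = w(f, q) − (1/2) Σ_j β j (Hᵀ q²)_j` satisfies `∂Φ/∂qᵢ = ∂uᵢ/∂qᵢ` for every producer
`i`, for all `q ∈ ℝ₊ⁿ` and all `f`. -/
theorem stmt4 {n m l : ℕ}
    (B : Fin m → Fin l → ℝ) (H : Fin n → Fin m → ℝ)
    (α β : Fin m → ℝ) (hβ : ∀ j, 0 < β j)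
    (C : Fin n → ℝ → ℝ) (hC : ∀ i, Differentiable ℝ (C i))
    -- Assumption A2: each row of H has exactly one entry equal to 1, the rest 0
    (hH01 : ∀ i j, H i j = 0 ∨ H i j = 1)
    (hH1 : ∀ i, ∑ j, H i j = 1)
    -- affine price functions
    (P : Fin m → ℝ → ℝ) (hP : ∀ j d, P j d = α j - β j * d)
    (i : Fin n) (q : Fin n → ℝ) (hq : ∀ i', 0 ≤ q i') (f : Fin l → ℝ) :
    deriv (fun x : ℝ =>
        -- Φ(f, q) with q i replaced by x
        ((∑ j, ∫ s in (0 : ℝ)..((∑ k, B j k * f k) + ∑ i', H i' j * Function.update q i x i'),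
            P j s)
          - ∑ i', C i' (Function.update q i x i')
          - (1 / 2) * ∑ j, β j * ∑ i', H i' j * (Function.update q i x i') ^ 2)) (q i)
    = deriv (fun x : ℝ =>
        -- uᵢ(f, q) with q i replaced by x
        (x * (∑ j, H i j *
              P j ((∑ k, B j k * f k) + ∑ i', H i' j * Function.update q i x i'))
          - C i x)) (q i) :=
  stmt4_general B H α β C hH01 P hP i q f
end

section
/- Under Assumptions A1 and A2, the networked Cournot game with market maker admits at least one Nash equilibrium (q*, f*) with q* ∈ ℝ₊^n and |f*| ≤ c. -/
open Finset intervalIntegral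

/-- Total consumption at market `j`: `(Bf + Hᵀq)_j`. -/
noncomputable def demand {n m l : ℕ} (B : Fin m → Fin l → ℝ) (H : Fin n → Fin m → ℝ)
    (f : Fin l → ℝ) (q : Fin n → ℝ) (j : Fin m) : ℝ :=
  (∑ k, B j k * f k) + ∑ i, H i j * q i

/-- Producer `i`'s utility. -/
noncomputable def producerU {n m l : ℕ} (B : Fin m → Fin l → ℝ) (H : Fin n → Fin m → ℝ)
    (P : Fin m → ℝ → ℝ) (C : Fin n → ℝ → ℝ) (i : Fin n)
    (f : Fin l → ℝ) (q : Fin n → ℝ) : ℝ :=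
  q i * (∑ j, H i j * P j (demand B H f q j)) - C i (q i)

/-- Market maker's (Marshallian welfare) utility. -/
noncomputable def makerW {n m l : ℕ} (B : Fin m → Fin l → ℝ) (H : Fin n → Fin m → ℝ)
    (P : Fin m → ℝ → ℝ) (C : Fin n → ℝ → ℝ)
    (f : Fin l → ℝ) (q : Fin n → ℝ) : ℝ :=
  (∑ j, ∫ s in (0 : ℝ)..(demand B H f q j), P j s) - ∑ i, C i (q i)

/-!
Each row of `H` is a unit vector, so producer `i` sells in a single market `mk i`. When the total
demand there is `d`, A1 makes the producer's profit concave in its own output, and the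
complementarity solution `bestResponse` of its first-order condition is continuous, nonincreasing
in `d`, and zero once the price is nonpositive. Hence `d ↦ d - ∑_{mk i = j} bestResponse_i d` is an
order isomorphism of `ℝ`; its inverse `g_j` gives the clearing demand of market `j` when the market
maker supplies `(B f)_j`. The market maker's problem thus has the potential
`f ↦ ∑_j ∫_0^{(B f)_j} P_j ∘ g_j`, continuous on the compact box `|f| ≤ c`. At a maximizer its
first-order condition is that of the concave welfare `makerW` at the clearing demands, so the
maximizer, together with the outputs `bestResponse_i (g_j …)`, is a Nash equilibrium.
-/

open Filter Topology Set

lemma continuous_of_strictAnti_of_apply_eq_zero {X : Type*} [TopologicalSpace X]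
    {F : X → ℝ → ℝ} {r : X → ℝ} (hF : ∀ x, Continuous (F · x)) (hanti : ∀ d, StrictAnti (F d))
    (hr : ∀ d, F d (r d) = 0) : Continuous r := by
  refine continuous_iff_continuousAt.2 fun d => tendsto_order.2 ⟨fun a ha => ?_, fun b hb => ?_⟩
  · have hpos : 0 < F d a := hr d ▸ hanti d ha
    filter_upwards [(hF a).continuousAt.eventually_const_lt hpos] with d' hd'
    exact (hanti d').lt_iff_gt.1 (hr d' ▸ hd')
  · have hneg : F d b < 0 := hr d ▸ hanti d hb
    filter_upwards [(hF b).continuousAt.eventually_lt_const hneg] with d' hd'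
    exact (hanti d').lt_iff_gt.1 (hr d' ▸ hd')

section Producer

variable {p C : ℝ → ℝ}

-- The derivative at `x` of the profit `y ↦ y * p (r + y) - C y`, with `d = r + x` the total demand.
noncomputable def marginalProfit (p C : ℝ → ℝ) (d x : ℝ) : ℝ :=
  p d + x * deriv p d - deriv C x

lemma marginalProfit_strictAnti (hp' : ∀ d, deriv p d < 0) (hC' : Monotone (deriv C)) (d : ℝ) :
    StrictAnti (marginalProfit p C d) := fun x y hxy => by
  have := mul_lt_mul_of_neg_right hxy (hp' d)
  have := hC' hxy.le
  simp only [marginalProfit]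
  linarith

lemma marginalProfit_antitone_demand (hp' : ∀ d, deriv p d < 0) (hp'' : Antitone (deriv p))
    {x : ℝ} (hx : 0 ≤ x) : Antitone (marginalProfit p C · x) := fun d₁ d₂ hd => by
  have := (strictAnti_of_deriv_neg hp').antitone hd
  have := mul_le_mul_of_nonneg_left (hp'' hd) hx
  simp only [marginalProfit]
  linarith

lemma continuous_marginalProfit_demand (hp' : ∀ d, deriv p d < 0) (hp'c : Continuous (deriv p))
    (x : ℝ) : Continuous (marginalProfit p C · x) := by
  have hpc : Continuous p := continuous_iff_continuousAt.2 fun d =>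
    (differentiableAt_of_deriv_ne_zero (hp' d).ne).continuousAt
  unfold marginalProfit
  fun_prop

lemma exists_marginalProfit_eq_zero (hp' : ∀ d, deriv p d < 0) (hC' : Monotone (deriv C))
    (hC'c : Continuous (deriv C)) (d : ℝ) : ∃ x, marginalProfit p C d x = 0 := by
  have hcont : Continuous (marginalProfit p C d) := by unfold marginalProfit; fun_prop
  have hbot : Tendsto (marginalProfit p C d) atBot atTop := by
    refine tendsto_atTop_mono' _ ?_ <| tendsto_atTop_add_const_right _ (p d - deriv C 0) <|
      tendsto_id.atBot_mul_const_of_neg (hp' d)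
    filter_upwards [eventually_le_atBot 0] with x hx
    have := hC' hx
    simp only [marginalProfit, id]
    linarith
  have htop : Tendsto (marginalProfit p C d) atTop atBot := by
    refine tendsto_atBot_mono' _ ?_ <| tendsto_atBot_add_const_right _ (p d - deriv C 0) <|
      tendsto_id.atTop_mul_const_of_neg (hp' d)
    filter_upwards [eventually_ge_atTop 0] with x hx
    have := hC' hx
    simp only [marginalProfit, id]
    linarith
  exact hcont.surjective' hbot htop 0

noncomputable def focRoot (p C : ℝ → ℝ) (d : ℝ) : ℝ :=
  Classical.epsilon (marginalProfit p C d · = 0)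

-- `d` is the total demand in the producer's market, its own output included.
noncomputable def bestResponse (p C : ℝ → ℝ) (d : ℝ) : ℝ :=
  max 0 (focRoot p C d)

lemma marginalProfit_focRoot (hp' : ∀ d, deriv p d < 0) (hC' : Monotone (deriv C))
    (hC'c : Continuous (deriv C)) (d : ℝ) : marginalProfit p C d (focRoot p C d) = 0 :=
  Classical.epsilon_spec (exists_marginalProfit_eq_zero hp' hC' hC'c d)

lemma continuous_bestResponse (hp' : ∀ d, deriv p d < 0) (hp'c : Continuous (deriv p))
    (hC' : Monotone (deriv C)) (hC'c : Continuous (deriv C)) : Continuous (bestResponse p C) :=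
  continuous_const.max <| continuous_of_strictAnti_of_apply_eq_zero
    (continuous_marginalProfit_demand hp' hp'c) (marginalProfit_strictAnti hp' hC')
    (marginalProfit_focRoot hp' hC' hC'c)

lemma marginalProfit_bestResponse_nonpos (hp' : ∀ d, deriv p d < 0) (hC' : Monotone (deriv C))
    (hC'c : Continuous (deriv C)) (d : ℝ) : marginalProfit p C d (bestResponse p C d) ≤ 0 :=
  marginalProfit_focRoot hp' hC' hC'c d ▸
    (marginalProfit_strictAnti hp' hC' d).antitone (le_max_right _ _)

lemma marginalProfit_bestResponse_eq_zero (hp' : ∀ d, deriv p d < 0) (hC' : Monotone (deriv C))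
    (hC'c : Continuous (deriv C)) {d : ℝ} (hpos : 0 < bestResponse p C d) :
    marginalProfit p C d (bestResponse p C d) = 0 := by
  have hroot : 0 < focRoot p C d := by simpa [bestResponse] using hpos
  rw [bestResponse, max_eq_right hroot.le]
  exact marginalProfit_focRoot hp' hC' hC'c d

lemma antitone_bestResponse (hp' : ∀ d, deriv p d < 0) (hp'' : Antitone (deriv p))
    (hC' : Monotone (deriv C)) (hC'c : Continuous (deriv C)) : Antitone (bestResponse p C) := by
  intro d₁ d₂ hd
  refine max_le (le_max_left _ _) ?_
  rcases le_or_gt (focRoot p C d₂) 0 with hr₂ | hr₂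
  · exact hr₂.trans (le_max_left _ _)
  refine le_max_of_le_right <| (marginalProfit_strictAnti hp' hC' d₁).le_iff_ge.1 ?_
  calc marginalProfit p C d₁ (focRoot p C d₁)
      = marginalProfit p C d₂ (focRoot p C d₂) := by
        rw [marginalProfit_focRoot hp' hC' hC'c, marginalProfit_focRoot hp' hC' hC'c]
    _ ≤ marginalProfit p C d₁ (focRoot p C d₂) := marginalProfit_antitone_demand hp' hp'' hr₂.le hd

lemma bestResponse_eq_zero (hp' : ∀ d, deriv p d < 0) (hC' : Monotone (deriv C))
    (hC'c : Continuous (deriv C)) (hC'0 : 0 ≤ deriv C 0) {d : ℝ} (hpd : p d ≤ 0) :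
    bestResponse p C d = 0 := by
  refine max_eq_left <| (marginalProfit_strictAnti hp' hC' d).le_iff_ge.1 ?_
  rw [marginalProfit_focRoot hp' hC' hC'c]
  simp only [marginalProfit, zero_mul, add_zero]
  linarith

lemma eventually_bestResponse_eq_zero (hp' : ∀ d, deriv p d < 0) (hC' : Monotone (deriv C))
    (hC'c : Continuous (deriv C)) (hC'0 : 0 ≤ deriv C 0) {r : ℝ} (hr : p r = 0) :
    ∀ᶠ d in atTop, bestResponse p C d = 0 := by
  filter_upwards [eventually_ge_atTop r] with d hd
  exact bestResponse_eq_zero hp' hC' hC'c hC'0 (hr ▸ (strictAnti_of_deriv_neg hp').antitone hd)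

lemma profit_le_of_complementarity (hp' : ∀ d, deriv p d < 0) (hp'' : Antitone (deriv p))
    (hC : Differentiable ℝ C) (hC' : Monotone (deriv C)) {r q x : ℝ} (hq : 0 ≤ q)
    (hle : marginalProfit p C (r + q) q ≤ 0) (heq : 0 < q → marginalProfit p C (r + q) q = 0)
    (hx : 0 ≤ x) : x * p (r + x) - C x ≤ q * p (r + q) - C q := by
  set u : ℝ → ℝ := fun y => y * p (r + y) - C y
  set u' : ℝ → ℝ := fun y => marginalProfit p C (r + y) y
  have hu : ∀ y, HasDerivAt u (u' y) y := by
    intro y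
    have hpy : HasDerivAt (fun y => p (r + y)) (deriv p (r + y)) y :=
      (differentiableAt_of_deriv_ne_zero (hp' _).ne).hasDerivAt.comp_const_add r y
    exact (((hasDerivAt_id' y).mul hpy).sub (hC y).hasDerivAt).congr_deriv
      (by simp only [u', marginalProfit]; ring)
  have hucont : Continuous u := continuous_iff_continuousAt.2 fun y => (hu y).continuousAt
  have hu'anti : AntitoneOn u' (Ici 0) := fun y₁ hy₁ y₂ _ hy => calc
    u' y₂ ≤ marginalProfit p C (r + y₁) y₂ :=
      marginalProfit_antitone_demand hp' hp'' (le_trans hy₁ hy) (by linarith)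
    _ ≤ u' y₁ := (marginalProfit_strictAnti hp' hC' _).antitone hy
  rcases le_total x q with hxq | hqx
  · refine monotoneOn_of_hasDerivWithinAt_nonneg (convex_Icc 0 q) hucont.continuousOn
      (fun y _ => (hu y).hasDerivWithinAt) (fun y hy => ?_) ⟨hx, hxq⟩ ⟨hq, le_rfl⟩ hxq
    rw [interior_Icc] at hy
    rw [← heq (hy.1.trans hy.2)]
    exact hu'anti (mem_Ici.2 hy.1.le) (mem_Ici.2 hq) hy.2.le
  · refine antitoneOn_of_hasDerivWithinAt_nonpos (convex_Ici q) hucont.continuousOn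
      (fun y _ => (hu y).hasDerivWithinAt) (fun y hy => ?_) self_mem_Ici hqx hqx
    rw [interior_Ici] at hy
    exact (hu'anti (mem_Ici.2 hq) (mem_Ici.2 (hq.trans hy.out.le)) hy.out.le).trans hle

end Producer

lemma exists_orderIso_sub_sum {ι : Type*} (s : Finset ι) {β : ι → ℝ → ℝ}
    (hc : ∀ i, Continuous (β i)) (ha : ∀ i, Antitone (β i))
    (h0 : ∀ i, ∀ᶠ d in atTop, β i d = 0) : ∃ e : ℝ ≃o ℝ, ∀ d, e d = d - ∑ i ∈ s, β i d := by
  set K : ℝ → ℝ := fun d => d - ∑ i ∈ s, β i d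
  have hmono : StrictMono K := fun d₁ d₂ hd => by
    have := sum_le_sum fun i (_ : i ∈ s) => ha i hd.le
    simp only [K]
    linarith
  have hcont : Continuous K := continuous_id.sub (continuous_finsetSum _ fun i _ => hc i)
  have htop : Tendsto K atTop atTop := tendsto_id.congr' <| by
    filter_upwards [(eventually_all_finset s).2 fun i _ => h0 i] with d hd
    simp [K, sum_eq_zero hd]
  have hbot : Tendsto K atBot atBot := by
    refine tendsto_atBot_mono' _ ?_ <| tendsto_atBot_add_const_right _ (-∑ i ∈ s, β i 0) tendsto_id
    filter_upwards [eventually_le_atBot 0] with d hd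
    have := sum_le_sum fun i (_ : i ∈ s) => ha i hd
    simp only [K, id]
    linarith
  exact ⟨hmono.orderIsoOfSurjective K (hcont.surjective htop hbot), fun d => rfl⟩

lemma integral_le_mul_sub_of_antitone {f : ℝ → ℝ} (hf : Antitone f) (a b : ℝ) :
    ∫ s in a..b, f s ≤ f a * (b - a) := by
  rcases le_total a b with hab | hba
  · calc ∫ s in a..b, f s ≤ ∫ _ in a..b, f a :=
          integral_mono_on hab hf.intervalIntegrable intervalIntegrable_const
            fun s hs => hf hs.1
      _ = f a * (b - a) := by simp [mul_comm]
  · rw [integral_symm]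
    have : ∫ _ in b..a, f a ≤ ∫ s in b..a, f s :=
      integral_mono_on hba intervalIntegrable_const hf.intervalIntegrable fun s hs => hf hs.2
    simp only [integral_const, smul_eq_mul] at this
    linarith

lemma sum_mul_apply_sub_nonpos_of_isMaxOn {ι E : Type*} [Fintype ι] [NormedAddCommGroup E]
    [NormedSpace ℝ E] {K : Set E} (hK : Convex ℝ K) (a : ι → E →L[ℝ] ℝ) {F f : ι → ℝ → ℝ}
    (hF : ∀ j y, HasDerivAt (F j) (f j y) y) {x₀ : E}
    (hmax : IsMaxOn (fun x => ∑ j, F j (a j x)) K x₀) (hx₀ : x₀ ∈ K) {x : E} (hx : x ∈ K) :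
    ∑ j, f j (a j x₀) * a j (x - x₀) ≤ 0 := by
  have hderiv : HasFDerivAt (fun x => ∑ j, F j (a j x)) (∑ j, f j (a j x₀) • a j) x₀ :=
    HasFDerivAt.fun_sum fun j _ => (hF j (a j x₀)).comp_hasFDerivAt x₀ (a j).hasFDerivAt
  simpa using hmax.localize.hasFDerivWithinAt_nonpos hderiv.hasFDerivWithinAt
    (sub_mem_posTangentConeAt_of_segment_subset (hK.segment_subset hx₀ hx))

lemma exists_eq_pi_single_of_sum_eq_one {ι : Type*} [Fintype ι] [DecidableEq ι] {v : ι → ℝ}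
    (h01 : ∀ j, v j = 0 ∨ v j = 1) (hsum : ∑ j, v j = 1) : ∃ j₀, v = Pi.single j₀ 1 := by
  have hv0 : ∀ j, 0 ≤ v j := fun j => by rcases h01 j with h | h <;> simp [h]
  obtain ⟨j₀, hj₀⟩ : ∃ j₀, v j₀ = 1 := by
    by_contra! h
    have := Finset.sum_eq_zero fun j (_ : j ∈ Finset.univ) => (h01 j).resolve_right (h j)
    linarith
  refine ⟨j₀, funext fun j => ?_⟩
  rcases eq_or_ne j j₀ with rfl | hj
  · simp [hj₀]
  rw [Pi.single_eq_of_ne hj]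
  refine (h01 j).resolve_right fun h1 => ?_
  have := sum_le_sum_of_subset_of_nonneg (subset_univ {j, j₀}) fun k _ _ => hv0 k
  rw [sum_pair hj, h1, hj₀, hsum] at this
  norm_num at this

section Game

variable {n m l : ℕ} {B : Fin m → Fin l → ℝ} {H : Fin n → Fin m → ℝ} {P : Fin m → ℝ → ℝ}
  {C : Fin n → ℝ → ℝ}

lemma sum_mul_pi_single {mk : Fin n → Fin m} (hH : ∀ i, H i = Pi.single (mk i) 1)
    (q : Fin n → ℝ) (j : Fin m) : ∑ i, H i j * q i = ∑ i with mk i = j, q i := by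
  simp [hH, Pi.single_apply, sum_filter, eq_comm]

lemma demand_update {i : Fin n} {j : Fin m} (hH : H i = Pi.single j 1) (f : Fin l → ℝ)
    (q : Fin n → ℝ) (x : ℝ) :
    demand B H f (Function.update q i x) j = demand B H f q j - q i + x := by
  have hterm : ∀ i', H i' j * Function.update q i x i' =
      H i' j * q i' + if i' = i then x - q i else 0 := fun i' => by
    rcases eq_or_ne i' i with rfl | hi'
    · simp [hH]
    · simp [hi']
  simp only [demand, hterm, sum_add_distrib, sum_ite_eq', Finset.mem_univ, if_true]
  ring

lemma producerU_update {i : Fin n} {j : Fin m} (hH : H i = Pi.single j 1) (f : Fin l → ℝ)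
    (q : Fin n → ℝ) (x : ℝ) :
    producerU B H P C i f (Function.update q i x) =
      x * P j (demand B H f q j - q i + x) - C i x := by
  simp [producerU, hH, Pi.single_apply, demand_update hH]

lemma producerU_update_le {i : Fin n} {j : Fin m} (hH : H i = Pi.single j 1)
    (hp' : ∀ d, deriv (P j) d < 0) (hp'' : Antitone (deriv (P j)))
    (hC : Differentiable ℝ (C i)) (hC' : Monotone (deriv (C i))) {f : Fin l → ℝ}
    {q : Fin n → ℝ} (hq : 0 ≤ q i)
    (hle : marginalProfit (P j) (C i) (demand B H f q j) (q i) ≤ 0)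
    (heq : 0 < q i → marginalProfit (P j) (C i) (demand B H f q j) (q i) = 0)
    {x : ℝ} (hx : 0 ≤ x) :
    producerU B H P C i f (Function.update q i x) ≤ producerU B H P C i f q := by
  have hself := producerU_update (B := B) (P := P) (C := C) hH f q (q i)
  rw [Function.update_eq_self] at hself
  rw [producerU_update hH, hself]
  exact profit_le_of_complementarity hp' hp'' hC hC' hq (by rwa [sub_add_cancel])
    (by rwa [sub_add_cancel]) hx

lemma makerW_le_of_foc (hP : ∀ j, Antitone (P j)) {f fs : Fin l → ℝ} {q : Fin n → ℝ}
    (hfoc : ∑ j, P j (demand B H fs q j) * ((∑ k, B j k * f k) - ∑ k, B j k * fs k) ≤ 0) :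
    makerW B H P C f q ≤ makerW B H P C fs q := by
  have hj : ∀ j, (∫ s in (0 : ℝ)..demand B H f q j, P j s) -
      (∫ s in (0 : ℝ)..demand B H fs q j, P j s) ≤ P j (demand B H fs q j) * ((∑ k, B j k * f k) - ∑ k, B j k * fs k) := fun j => by
    rw [integral_interval_sub_left (hP j).intervalIntegrable (hP j).intervalIntegrable]
    convert integral_le_mul_sub_of_antitone (hP j) _ _ using 2
    simp only [demand]
    ring
  have := sum_le_sum fun j (_ : j ∈ Finset.univ) => hj j
  simp only [makerW, sum_sub_distrib] at this ⊢
  linarith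

lemma exists_market_clearing_with_maker_foc (mk : Fin n → Fin m)
    (hH : ∀ i, H i = Pi.single (mk i) 1) {c : Fin l → ℝ} (hc : ∀ k, 0 ≤ c k)
    (hP : ∀ j, Continuous (P j)) {β : Fin n → ℝ → ℝ} (hβc : ∀ i, Continuous (β i))
    (hβa : ∀ i, Antitone (β i)) (hβ0 : ∀ i, ∀ᶠ d in atTop, β i d = 0) :
    ∃ (fs : Fin l → ℝ) (ds : Fin m → ℝ), (∀ k, |fs k| ≤ c k) ∧
      (∀ j, demand B H fs (fun i => β i (ds (mk i))) j = ds j) ∧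
      ∀ f : Fin l → ℝ, (∀ k, |f k| ≤ c k) →
        ∑ j, P j (ds j) * ((∑ k, B j k * f k) - ∑ k, B j k * fs k) ≤ 0 := by
  choose e he using fun j => exists_orderIso_sub_sum {i | mk i = j} hβc hβa hβ0
  set K : Set (Fin l → ℝ) := Set.univ.pi fun k => Icc (-c k) (c k)
  have hK : ∀ f, f ∈ K ↔ ∀ k, |f k| ≤ c k := fun f => by
    simp only [K, Set.mem_univ_pi, Set.mem_Icc, abs_le]
  let a : Fin m → (Fin l → ℝ) →L[ℝ] ℝ := fun j => ∑ k, B j k • ContinuousLinearMap.proj k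
  have ha : ∀ j f, a j f = ∑ k, B j k * f k := by simp [a]
  set F : Fin m → ℝ → ℝ := fun j y => ∫ s in (0 : ℝ)..y, P j ((e j).symm s)
  have hF : ∀ j y, HasDerivAt (F j) (P j ((e j).symm y)) y := fun j y =>
    (((hP j).comp (e j).symm.continuous).integral_hasStrictDerivAt 0 y).hasDerivAt
  have hFc : ∀ j, Continuous (F j) := fun j =>
    continuous_iff_continuousAt.2 fun y => (hF j y).continuousAt
  obtain ⟨fs, hfs, hmax⟩ : ∃ fs ∈ K, IsMaxOn (fun f => ∑ j, F j (a j f)) K fs :=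
    (isCompact_univ_pi fun k => isCompact_Icc).exists_isMaxOn
      ⟨0, (hK 0).2 fun k => by simpa using hc k⟩
      (continuous_finsetSum _ fun j _ => (hFc j).comp (a j).continuous).continuousOn
  refine ⟨fs, fun j => (e j).symm (a j fs), (hK fs).1 hfs, fun j => ?_, fun f hf => ?_⟩
  · have hclear := he j ((e j).symm (a j fs))
    have hsum : ∑ i with mk i = j, β i ((e (mk i)).symm (a (mk i) fs)) =
        ∑ i with mk i = j, β i ((e j).symm (a j fs)) :=
      sum_congr rfl fun i hi => by rw [(mem_filter.1 hi).2]
    rw [OrderIso.apply_symm_apply] at hclear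
    rw [demand, sum_mul_pi_single hH, ← ha, hsum]
    linarith
  · simpa [ha, mul_sub, sum_sub_distrib] using sum_mul_apply_sub_nonpos_of_isMaxOn
      (convex_pi fun k _ => convex_Icc _ _) a hF hmax hfs ((hK f).2 hf)

end Game

theorem stmt10_general {n m l : ℕ}
    (B : Fin m → Fin l → ℝ) (H : Fin n → Fin m → ℝ) (c : Fin l → ℝ) (hc : ∀ k, 0 ≤ c k)
    (P : Fin m → ℝ → ℝ) (C : Fin n → ℝ → ℝ)
    -- Assumption A1
    (hPsmooth : ∀ j, ContDiff ℝ 2 (P j))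
    (hP' : ∀ j x, deriv (P j) x < 0)
    (hP'' : ∀ j x, deriv (deriv (P j)) x ≤ 0)
    (hPzero : ∀ j, ∃ rbar : ℝ, 0 < rbar ∧ P j rbar = 0)
    (hCsmooth : ∀ i, ContDiff ℝ 2 (C i))
    (hC' : ∀ i x, 0 ≤ deriv (C i) x)
    (hC'' : ∀ i x, 0 ≤ deriv (deriv (C i)) x)
    -- Assumption A2: each row of H has exactly one entry equal to 1, the rest 0
    (hH01 : ∀ i j, H i j = 0 ∨ H i j = 1)
    (hH1 : ∀ i, ∑ j, H i j = 1) :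
    ∃ (qs : Fin n → ℝ) (fs : Fin l → ℝ),
      (∀ i, 0 ≤ qs i) ∧ (∀ k, |fs k| ≤ c k) ∧
      (∀ (i : Fin n) (x : ℝ), 0 ≤ x →
          producerU B H P C i fs (Function.update qs i x) ≤ producerU B H P C i fs qs) ∧
      (∀ f : Fin l → ℝ, (∀ k, |f k| ≤ c k) →
          makerW B H P C f qs ≤ makerW B H P C fs qs) := by
  choose mk hmk using fun i => exists_eq_pi_single_of_sum_eq_one (hH01 i) (hH1 i)
  have hPc : ∀ j, Continuous (P j) := fun j => (hPsmooth j).continuous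
  have hP'c : ∀ j, Continuous (deriv (P j)) := fun j => (hPsmooth j).continuous_deriv one_le_two
  have hP'anti : ∀ j, Antitone (deriv (P j)) := fun j =>
    antitone_of_deriv_nonpos (hPsmooth j).differentiable_deriv_two (hP'' j)
  have hCd : ∀ i, Differentiable ℝ (C i) := fun i => (hCsmooth i).differentiable two_ne_zero
  have hC'c : ∀ i, Continuous (deriv (C i)) := fun i => (hCsmooth i).continuous_deriv one_le_two
  have hC'mono : ∀ i, Monotone (deriv (C i)) := fun i =>
    monotone_of_deriv_nonneg (hCsmooth i).differentiable_deriv_two (hC'' i)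
  obtain ⟨fs, ds, hfs, hds, hfoc⟩ := exists_market_clearing_with_maker_foc (B := B) mk hmk hc hPc
    (β := fun i => bestResponse (P (mk i)) (C i))
    (fun i => continuous_bestResponse (hP' _) (hP'c _) (hC'mono i) (hC'c i))
    (fun i => antitone_bestResponse (hP' _) (hP'anti _) (hC'mono i) (hC'c i))
    (fun i => (hPzero (mk i)).elim fun _ hr =>
      eventually_bestResponse_eq_zero (hP' _) (hC'mono i) (hC'c i) (hC' i 0) hr.2)
  refine ⟨fun i => bestResponse (P (mk i)) (C i) (ds (mk i)), fs, fun i => le_max_left _ _, hfs,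
    fun i x hx => ?_, fun f hf => makerW_le_of_foc (fun j => (strictAnti_of_deriv_neg (hP' j)).antitone) ?_⟩
  · refine producerU_update_le (hmk i) (hP' _) (hP'anti _) (hCd i) (hC'mono i) (le_max_left _ _)
      ?_ (fun hpos => ?_) hx <;> rw [hds]
    · exact marginalProfit_bestResponse_nonpos (hP' _) (hC'mono i) (hC'c i) _
    · exact marginalProfit_bestResponse_eq_zero (hP' _) (hC'mono i) (hC'c i) hpos
  · simpa only [hds] using hfoc f hf

/-- Under A1 and A2, the networked Cournot game with market maker admits at
least one Nash equilibrium `(q*, f*)` with `q* ∈ ℝ₊ⁿ` and `|f*| ≤ c`. -/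
theorem stmt10 {n m l : ℕ}
    (B : Fin m → Fin l → ℝ) (hB : ∀ j k, B j k = 0 ∨ B j k = 1 ∨ B j k = -1)
    (H : Fin n → Fin m → ℝ) (c : Fin l → ℝ) (hc : ∀ k, 0 ≤ c k)
    (P : Fin m → ℝ → ℝ) (C : Fin n → ℝ → ℝ)
    -- Assumption A1
    (hPsmooth : ∀ j, ContDiff ℝ 2 (P j))
    (hP' : ∀ j x, deriv (P j) x < 0)
    (hP'' : ∀ j x, deriv (deriv (P j)) x ≤ 0)
    (hPzero : ∀ j, ∃ rbar : ℝ, 0 < rbar ∧ P j rbar = 0)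
    (hCsmooth : ∀ i, ContDiff ℝ 2 (C i))
    (hC' : ∀ i x, 0 ≤ deriv (C i) x)
    (hC'' : ∀ i x, 0 ≤ deriv (deriv (C i)) x)
    -- Assumption A2: each row of H has exactly one entry equal to 1, the rest 0
    (hH01 : ∀ i j, H i j = 0 ∨ H i j = 1)
    (hH1 : ∀ i, ∑ j, H i j = 1) :
    ∃ (qs : Fin n → ℝ) (fs : Fin l → ℝ),
      (∀ i, 0 ≤ qs i) ∧ (∀ k, |fs k| ≤ c k) ∧
      (∀ (i : Fin n) (x : ℝ), 0 ≤ x →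
          producerU B H P C i fs (Function.update qs i x) ≤ producerU B H P C i fs qs) ∧
      (∀ f : Fin l → ℝ, (∀ k, |f k| ≤ c k) →
          makerW B H P C f qs ≤ makerW B H P C fs qs) :=
  stmt10_general B H c hc P C hPsmooth hP' hP'' hPzero hCsmooth hC' hC'' hH01 hH1
end

section
/- Let G = (V, E) be a finite connected oriented graph with capacities c_k > 0, let f ∈ ℝ^E with |f_k| ≤ c_k, and let h, j ∈ V. Suppose that for every subset U ⊆ V with h ∈ U and j ∉ U there exists an edge k of the cut (U, Uᶜ) that is not saturated in the direction from U to Uᶜ (i.e., f_k < c_k if k is oriented from U to Uᶜ, or f_k > −c_k if oriented from Uᶜ to U). Then there exists ε > 0 and a flow perturbation δ ∈ ℝ^E supported on a path from h to j such that f + δ still satisfies the capacity constraints and B(f+δ) = Bf + ε(e_h − e_j), where e_h, e_j denote standard basis vectors and B is the node-edge incidence matrix. -/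
open Finset Topology

/-!
Call `b` residually adjacent to `a` when some edge between them can carry more flow in the
direction from `a` to `b`. The vertices residually reachable from `h` form a cut containing `h`
that no edge leaves in the residual sense, so, no `h`–`j` cut being saturated, `j` is reachable
along a simple path. The unit flow along that path has divergence `e_h - e_j`, and it points into
the slack of every edge it uses, so a small enough positive multiple of it keeps `f` feasible.
-/

theorem Relation.reflTransGen_of_forall_cut {α : Type*} [Fintype α] {r : α → α → Prop}
    {a b : α} (hcut : ∀ U : Finset α, a ∈ U → b ∉ U → ∃ x y, x ∈ U ∧ y ∉ U ∧ r x y) :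
    Relation.ReflTransGen r a b := by
  classical
  by_contra hab
  obtain ⟨x, y, hx, hy, hxy⟩ :=
    hcut {v | Relation.ReflTransGen r a v} (by simp [Relation.ReflTransGen.refl]) (by simpa)
  simp only [Finset.mem_filter, Finset.mem_univ, true_and] at hx hy
  exact hy (hx.tail hxy)

theorem List.exists_nodup_isChain_cons_of_reflTransGen {α : Type*} {r : α → α → Prop}
    {a b : α} (h : Relation.ReflTransGen r a b) :
    ∃ l : List α, IsChain r (a :: l) ∧ (a :: l).Nodup ∧ (a :: l).getLast? = some b := by
  induction h using Relation.ReflTransGen.head_induction_on with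
  | refl => exact ⟨[], .singleton _, nodup_singleton _, rfl⟩
  | @head a c hac _ ih =>
    obtain ⟨l, hch, hnd, hlast⟩ := ih
    by_cases ha : a ∈ c :: l
    · obtain ⟨s, t, hst⟩ := append_of_mem ha
      rw [hst] at hch hnd hlast
      refine ⟨t, hch.suffix (suffix_append _ _), hnd.sublist (sublist_append_right _ _), ?_⟩
      simpa [getLast?_append] using hlast
    · exact ⟨c :: l, hch.cons_cons hac, nodup_cons.mpr ⟨ha, hnd⟩, by simpa using hlast⟩

theorem eventually_nhdsGT_abs_add_mul_le {x d c : ℝ} (hx : |x| ≤ c) (hpos : 0 < d → x < c)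
    (hneg : d < 0 → -c < x) : ∀ᶠ ε in 𝓝[>] 0, |x + ε * d| ≤ c := by
  have hlim : Filter.Tendsto (fun ε : ℝ => x + ε * d) (𝓝[>] 0) (𝓝 x) :=
    (Continuous.tendsto' (by fun_prop) 0 x (by simp)).mono_left nhdsWithin_le_nhds
  obtain ⟨hxl, hxu⟩ := abs_le.mp hx
  rcases lt_trichotomy d 0 with hd | rfl | hd
  · filter_upwards [self_mem_nhdsWithin, hlim.eventually (lt_mem_nhds (hneg hd))] with ε hε hl
    exact abs_le.mpr ⟨hl.le, by nlinarith [Set.mem_Ioi.mp hε]⟩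
  · simpa using hx
  · filter_upwards [self_mem_nhdsWithin, hlim.eventually (gt_mem_nhds (hpos hd))] with ε hε hu
    exact abs_le.mpr ⟨by nlinarith [Set.mem_Ioi.mp hε], hu.le⟩

theorem exists_pos_forall_abs_add_mul_le {ι : Type*} [Finite ι] {x d c : ι → ℝ}
    (hx : ∀ k, |x k| ≤ c k) (hpos : ∀ k, 0 < d k → x k < c k)
    (hneg : ∀ k, d k < 0 → -c k < x k) : ∃ ε > 0, ∀ k, |x k + ε * d k| ≤ c k := by
  obtain ⟨ε, hfeas, hε⟩ := ((Filter.eventually_all.mpr fun k =>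
    eventually_nhdsGT_abs_add_mul_le (hx k) (hpos k) (hneg k)).and self_mem_nhdsWithin).exists
  exact ⟨ε, hε, hfeas⟩

theorem List.pair_infix_iff_getElem? {α : Type*} {l : List α} {a b : α} :
    [a, b] <:+: l ↔ ∃ i : ℕ, l[i]? = some a ∧ l[i + 1]? = some b := by
  rw [infix_iff_getElem?]
  constructor
  · rintro ⟨i, -, hi⟩
    exact ⟨i, by simpa using hi 0, by simpa [add_comm] using hi 1⟩
  · rintro ⟨i, ha, hb⟩
    refine ⟨i, ?_, fun n hn => ?_⟩
    · have := (getElem?_eq_some_iff.mp hb).1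
      simp only [length_cons, length_nil]
      omega
    · simp only [length_cons, length_nil] at hn
      interval_cases n <;> simpa [add_comm]

section AugmentingPath

variable {V E : Type*} (B : V → E → ℝ) (c f : E → ℝ)

def IsOrientedEdge (k : E) : Prop :=
  ∃ a b, a ≠ b ∧ B a k = 1 ∧ B b k = -1 ∧ ∀ v, v ≠ a → v ≠ b → B v k = 0

def ResidualAdj (a b : V) : Prop :=
  ∃ k, (B a k = 1 ∧ B b k = -1 ∧ f k < c k) ∨ (B b k = 1 ∧ B a k = -1 ∧ -c k < f k)

variable {B c f}

theorem IsOrientedEdge.eq_zero_of_ne {k : E} {x y v : V} (hk : IsOrientedEdge B k)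
    (hx : B x k ≠ 0) (hy : B y k ≠ 0) (hxy : x ≠ y) (hvx : v ≠ x) (hvy : v ≠ y) :
    B v k = 0 := by
  obtain ⟨a, b, -, -, -, hz⟩ := hk
  have hmem : ∀ u, B u k ≠ 0 → u = a ∨ u = b := fun u hu => by
    by_contra! h
    exact hu (hz u h.1 h.2)
  by_contra hv
  rcases hmem x hx with rfl | rfl <;> rcases hmem y hy with rfl | rfl <;>
    rcases hmem v hv with rfl | rfl <;> simp_all

theorem ResidualAdj.exists_sign {a b : V} (h : ResidualAdj B c f a b) :
    ∃ k s, (s = 1 ∨ s = -1) ∧ B a k = s ∧ B b k = -s ∧ s * f k < c k := by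
  obtain ⟨k, ⟨ha, hb, hf⟩ | ⟨hb, ha, hf⟩⟩ := h
  · exact ⟨k, 1, .inl rfl, ha, hb, by simpa⟩
  · exact ⟨k, -1, .inr rfl, ha, by simpa, by linarith⟩

theorem IsOrientedEdge.mul_eq_sub [DecidableEq V] {k : E} {x y : V} {s : ℝ}
    (hk : IsOrientedEdge B k) (hs : s = 1 ∨ s = -1) (hx : B x k = s) (hy : B y k = -s) (v : V) :
    B v k * s = (if v = x then 1 else 0) - (if v = y then 1 else 0) := by
  have hs0 : s ≠ 0 := by rcases hs with rfl | rfl <;> norm_num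
  have hxy : x ≠ y := by
    rintro rfl
    exact hs0 (by linarith)
  by_cases hvx : v = x
  · subst hvx
    rcases hs with rfl | rfl <;> simp [hx, hxy]
  by_cases hvy : v = y
  · subst hvy
    rcases hs with rfl | rfl <;> simp [hy, hvx]
  have hzero := hk.eq_zero_of_ne (by rwa [hx]) (by rwa [hy, neg_ne_zero]) hxy hvx hvy
  simp [hzero, hvx, hvy]

variable [Fintype E] [DecidableEq V] (B c f)

structure IsAugmentingPathFlow (vs : List V) (a b : V) (d : E → ℝ) : Prop where
  sum_mul_eq : ∀ v, ∑ k, B v k * d k = (if v = a then 1 else 0) - (if v = b then 1 else 0)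
  lt_of_pos : ∀ k, 0 < d k → f k < c k
  lt_of_neg : ∀ k, d k < 0 → -c k < f k
  exists_edge : ∀ x y, [x, y] <:+: vs → ∃ k, d k ≠ 0 ∧ B x k ≠ 0 ∧ B y k ≠ 0
  exists_pair : ∀ k, d k ≠ 0 → ∃ x y, [x, y] <:+: vs ∧ B x k ≠ 0 ∧ B y k ≠ 0

variable {B c f}

theorem isAugmentingPathFlow_singleton (a : V) : IsAugmentingPathFlow B c f [a] a a 0 where
  sum_mul_eq v := by simp
  lt_of_pos k := by simp
  lt_of_neg k := by simp
  exists_edge x y h := absurd h.length_le (by simp)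
  exists_pair k := by simp

theorem IsAugmentingPathFlow.eq_zero_of_not_mem {vs : List V} {a b x : V} {d : E → ℝ} {k : E}
    (hd : IsAugmentingPathFlow B c f vs a b d) (hnd : vs.Nodup) (hk : IsOrientedEdge B k)
    (hx : x ∉ vs) (hxk : B x k ≠ 0) : d k = 0 := by
  by_contra hdk
  obtain ⟨u, w, huw, hu, hw⟩ := hd.exists_pair k hdk
  have huw' : u ≠ w := by
    rintro rfl
    exact List.nodup_iff_sublist.mp hnd u huw.sublist
  refine hxk (hk.eq_zero_of_ne hu hw huw' ?_ ?_) <;> rintro rfl <;> exact hx (huw.subset (by simp))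

theorem IsAugmentingPathFlow.cons [DecidableEq E] (hB : ∀ k, IsOrientedEdge B k)
    {x y b : V} {t : List V} {d : E → ℝ} (hd : IsAugmentingPathFlow B c f (y :: t) y b d)
    (hnd : (x :: y :: t).Nodup) (hxy : ResidualAdj B c f x y) :
    ∃ d', IsAugmentingPathFlow B c f (x :: y :: t) x b d' := by
  obtain ⟨k, s, hs, hxk, hyk, hsf⟩ := hxy.exists_sign
  obtain ⟨hx, hnd⟩ := List.nodup_cons.mp hnd
  have hs0 : s ≠ 0 := by rcases hs with rfl | rfl <;> norm_num
  have hxk0 : B x k ≠ 0 := by rwa [hxk]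
  have hyk0 : B y k ≠ 0 := by rwa [hyk, neg_ne_zero]
  have hdk : d k = 0 := hd.eq_zero_of_not_mem hnd (hB k) hx hxk0
  have hd' : ∀ k', (d + Pi.single k s : E → ℝ) k' = if k' = k then s else d k' := by
    intro k'
    split_ifs with h <;> simp [h, hdk]
  refine ⟨d + Pi.single k s, fun v => ?_, fun k' => ?_, fun k' => ?_, fun u w huw => ?_,
    fun k' hk' => ?_⟩
  · simp only [Pi.add_apply, mul_add, sum_add_distrib, Pi.single_apply, mul_ite, mul_zero,
      sum_ite_eq', mem_univ, if_true, hd.sum_mul_eq v, (hB k).mul_eq_sub hs hxk hyk v]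
    ring
  · rw [hd']
    split_ifs with h
    · subst h
      rcases hs with rfl | rfl <;> intro hpos
      · simpa using hsf
      · norm_num at hpos
    · exact hd.lt_of_pos k'
  · rw [hd']
    split_ifs with h
    · subst h
      rcases hs with rfl | rfl <;> intro hneg
      · norm_num at hneg
      · linarith
    · exact hd.lt_of_neg k'
  · rcases List.infix_cons_iff.mp huw with hpre | hinf
    · obtain ⟨rfl, hw⟩ := List.cons_prefix_cons.mp hpre
      obtain ⟨rfl, -⟩ := List.cons_prefix_cons.mp hw
      exact ⟨k, by simpa [hd'], hxk0, hyk0⟩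
    · obtain ⟨k', hk', hu, hw⟩ := hd.exists_edge u w hinf
      have hkk : k' ≠ k := fun h => hk' (h ▸ hdk)
      exact ⟨k', by simpa [hd', hkk], hu, hw⟩
  · rw [hd'] at hk'
    split_ifs at hk' with h
    · subst h
      exact ⟨x, y, (List.prefix_append [x, y] t).isInfix, hxk0, hyk0⟩
    · obtain ⟨u, w, huw, hu, hw⟩ := hd.exists_pair k' hk'
      exact ⟨u, w, List.infix_cons_iff.mpr (.inr huw), hu, hw⟩

theorem exists_isAugmentingPathFlow [DecidableEq E] (hB : ∀ k, IsOrientedEdge B k) {a b : V}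
    {l : List V} (hch : (a :: l).IsChain (ResidualAdj B c f)) (hnd : (a :: l).Nodup)
    (hlast : (a :: l).getLast? = some b) : ∃ d, IsAugmentingPathFlow B c f (a :: l) a b d := by
  induction l generalizing a with
  | nil =>
    obtain rfl : a = b := by simpa using hlast
    exact ⟨0, isAugmentingPathFlow_singleton a⟩
  | cons y t ih =>
    obtain ⟨hay, hch⟩ := List.isChain_cons_cons.mp hch
    obtain ⟨d, hd⟩ := ih hch hnd.of_cons (by rwa [List.getLast?_cons_cons] at hlast)
    exact hd.cons hB hnd hay

end AugmentingPath

theorem stmt14_general {m l : ℕ}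
    (B : Fin m → Fin l → ℝ)
    -- B is the node-edge incidence matrix of an oriented graph: each edge has a tail (+1),
    -- a head (−1), and zeros elsewhere
    (hB : ∀ k : Fin l, ∃ a b : Fin m, a ≠ b ∧ B a k = 1 ∧ B b k = -1 ∧
        ∀ v : Fin m, v ≠ a → v ≠ b → B v k = 0)
    (c : Fin l → ℝ)
    (f : Fin l → ℝ) (hf : ∀ k, |f k| ≤ c k)
    (h j : Fin m)
    -- no h–j cut is saturated
    (hnosat : ∀ U : Finset (Fin m), h ∈ U → j ∉ U →
        ∃ (k : Fin l) (a b : Fin m), a ∈ U ∧ b ∉ U ∧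
          ((B a k = 1 ∧ B b k = -1 ∧ f k < c k) ∨ (B b k = 1 ∧ B a k = -1 ∧ -c k < f k))) :
    ∃ (ε : ℝ) (δ : Fin l → ℝ) (vs : List (Fin m)),
      0 < ε ∧
      -- feasibility of the perturbed flow
      (∀ k, |f k + δ k| ≤ c k) ∧
      -- the perturbation changes the net injections by ε(e_h − e_j)
      (∀ v : Fin m, ∑ k, B v k * (f k + δ k)
          = (∑ k, B v k * f k)
            + ε * ((if v = h then (1 : ℝ) else 0) - (if v = j then (1 : ℝ) else 0))) ∧
      -- vs is a path from h to j and δ is supported on its edges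
      vs.head? = some h ∧ vs.getLast? = some j ∧ vs.Nodup ∧
      (∀ i : ℕ, ∀ a b : Fin m, vs[i]? = some a → vs[i + 1]? = some b →
          ∃ k : Fin l, δ k ≠ 0 ∧ B a k ≠ 0 ∧ B b k ≠ 0) ∧
      (∀ k : Fin l, δ k ≠ 0 →
          ∃ (i : ℕ) (a b : Fin m), vs[i]? = some a ∧ vs[i + 1]? = some b ∧
            B a k ≠ 0 ∧ B b k ≠ 0) := by
  have hreach : Relation.ReflTransGen (ResidualAdj B c f) h j :=
    Relation.reflTransGen_of_forall_cut fun U hhU hjU => by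
      obtain ⟨k, a, b, ha, hb, hk⟩ := hnosat U hhU hjU
      exact ⟨a, b, ha, hb, k, hk⟩
  obtain ⟨p, hch, hnd, hlast⟩ := List.exists_nodup_isChain_cons_of_reflTransGen hreach
  obtain ⟨d, hd⟩ := exists_isAugmentingPathFlow hB hch hnd hlast
  obtain ⟨ε, hε, hfeas⟩ := exists_pos_forall_abs_add_mul_le hf hd.lt_of_pos hd.lt_of_neg
  refine ⟨ε, fun k => ε * d k, h :: p, hε, hfeas, fun v => ?_, rfl, hlast, hnd,
    fun i a b ha hb => ?_, fun k hk => ?_⟩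
  · simp only [mul_add, sum_add_distrib, mul_left_comm _ ε, ← mul_sum, hd.sum_mul_eq v]
  · obtain ⟨k, hk, hak, hbk⟩ :=
      hd.exists_edge a b (List.pair_infix_iff_getElem?.mpr ⟨i, ha, hb⟩)
    exact ⟨k, mul_ne_zero hε.ne' hk, hak, hbk⟩
  · obtain ⟨a, b, hab, ha, hb⟩ := hd.exists_pair k (right_ne_zero_of_mul hk)
    obtain ⟨i, hai, hbi⟩ := List.pair_infix_iff_getElem?.mp hab
    exact ⟨i, a, b, hai, hbi, ha, hb⟩

/-- augmenting-path lemma: in a finite connected oriented graph with capacities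
`c k > 0` and a feasible flow `f` (`|f k| ≤ c k`), if for every `U ⊆ V` with `h ∈ U`, `j ∉ U`
some edge of the cut `(U, Uᶜ)` is not saturated in the direction from `U` to `Uᶜ`, then there
exist `ε > 0` and a perturbation `δ` supported on a path from `h` to `j` such that `f + δ`
is still feasible and `B(f + δ) = Bf + ε(e_h − e_j)`. -/
theorem stmt14 {m l : ℕ}
    (B : Fin m → Fin l → ℝ)
    -- B is the node-edge incidence matrix of an oriented graph: each edge has a tail (+1),
    -- a head (−1), and zeros elsewhere
    (hB : ∀ k : Fin l, ∃ a b : Fin m, a ≠ b ∧ B a k = 1 ∧ B b k = -1 ∧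
        ∀ v : Fin m, v ≠ a → v ≠ b → B v k = 0)
    -- the graph is connected
    (hconn : ∀ U : Finset (Fin m), U.Nonempty → U ≠ Finset.univ →
        ∃ (k : Fin l) (a b : Fin m), a ∈ U ∧ b ∉ U ∧ B a k ≠ 0 ∧ B b k ≠ 0)
    (c : Fin l → ℝ) (hc : ∀ k, 0 < c k)
    (f : Fin l → ℝ) (hf : ∀ k, |f k| ≤ c k)
    (h j : Fin m) (hhj : h ≠ j)
    -- no h–j cut is saturated
    (hnosat : ∀ U : Finset (Fin m), h ∈ U → j ∉ U →
        ∃ (k : Fin l) (a b : Fin m), a ∈ U ∧ b ∉ U ∧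
          ((B a k = 1 ∧ B b k = -1 ∧ f k < c k) ∨ (B b k = 1 ∧ B a k = -1 ∧ -c k < f k))) :
    ∃ (ε : ℝ) (δ : Fin l → ℝ) (vs : List (Fin m)),
      0 < ε ∧
      -- feasibility of the perturbed flow
      (∀ k, |f k + δ k| ≤ c k) ∧
      -- the perturbation changes the net injections by ε(e_h − e_j)
      (∀ v : Fin m, ∑ k, B v k * (f k + δ k)
          = (∑ k, B v k * f k)
            + ε * ((if v = h then (1 : ℝ) else 0) - (if v = j then (1 : ℝ) else 0))) ∧
      -- vs is a path from h to j and δ is supported on its edges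
      vs.head? = some h ∧ vs.getLast? = some j ∧ vs.Nodup ∧
      (∀ i : ℕ, ∀ a b : Fin m, vs[i]? = some a → vs[i + 1]? = some b →
          ∃ k : Fin l, δ k ≠ 0 ∧ B a k ≠ 0 ∧ B b k ≠ 0) ∧
      (∀ k : Fin l, δ k ≠ 0 →
          ∃ (i : ℕ) (a b : Fin m), vs[i]? = some a ∧ vs[i + 1]? = some b ∧
            B a k ≠ 0 ∧ B b k ≠ 0) :=
  stmt14_general B hB c f hf h j hnosat
end
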